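/- Let σ = {v₁,…,v_t} be a chain in V(m,n,k), let w = x₁∧…∧x_k with x_i = Σ_{j=1}^{n} α_{ij} e_j for indeterminates α_{ij}, and for s = 1,…,t let A_s(α_{ij}) denote the polynomial (wᵐ, v_s) in the variables α_{ij} (a homogeneous polynomial of degree mk). Then dim(V₀(m,n,k) ∩ L(σ)) = r(σ), where r(σ) is the maximal number of linearly independent polynomials among A₁,…,A_t. -/

import Mathlib

open scoped BigOperators

/-- The index set `Π` of strictly increasing `k`-tuples from `{1,…,n}`,
realized as `k`-element subsets of `Fin n`. -/
abbrev PIdx (n k : ℕ) : Type := {s : Finset (Fin n) // s.card = k}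

/-- The strictly increasing tuple `(i₁ < … < i_k)` enumerating `α ∈ Π`. -/
noncomputable def toTuple {n k : ℕ} (α : PIdx n k) : Fin k → Fin n :=
  fun j => (α.1.orderIsoOfFin α.2 j : Fin n)

/-- Coordinates of the decomposable vector `x₁ ∧ … ∧ x_k` in the standard basis
`{e_α : α ∈ Π}` of `Λᵏℝⁿ`:  the `α`-coordinate is the `k × k` minor of the matrix
whose rows are the `xᵢ`, taken on the columns listed by `α`. -/
noncomputable def wedgeCoords {R : Type} [CommRing R] {n k : ℕ} (x : Fin k → Fin n → R) :
    PIdx n k → R :=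
  fun α => Matrix.det (Matrix.of fun i j => x i (toTuple α j))

/-- The model of `Λᵏℝⁿ` inside polynomials: a vector `w = Σ w_α e_α` is sent to the
linear polynomial `Σ_α w_α • X_α`.  The `m`-th symmetric power `Sᵐ(Λᵏℝⁿ)` is then the
space of homogeneous polynomials of degree `m` in the variables `X_α`, the symmetric
product `∨` being polynomial multiplication. -/
noncomputable def linPoly {R : Type} [CommRing R] {n k : ℕ} (w : PIdx n k → R) :
    MvPolynomial (PIdx n k) R :=
  ∑ α, MvPolynomial.C (w α) * MvPolynomial.X α

/-- `V₀(m,n,k)`: the linear span of the `m`-th powers `(x₁ ∧ … ∧ x_k)ᵐ` of decomposable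
vectors inside `Sᵐ(Λᵏℝⁿ)` (polynomial model). -/
noncomputable def V0 (m n k : ℕ) : Submodule ℝ (MvPolynomial (PIdx n k) ℝ) :=
  Submodule.span ℝ {p | ∃ x : Fin k → Fin n → ℝ, p = (linPoly (wedgeCoords x)) ^ m}

/-- `l_i(d)`: the number of occurrences of the index `i` among the tuples composing the
canonical basis vector (monomial) with exponent vector `d`. -/
def lcount {n k : ℕ} (d : PIdx n k →₀ ℕ) : Fin n → ℕ :=
  fun i => ∑ α : PIdx n k, if i ∈ α.1 then d α else 0

/-- The chain of type `(k₁,…,k_n) = c`: the set of canonical basis vectors (identified with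
their exponent vectors `d`, with `Σ d = m`) whose occurrence counts are `(l_i)_d = c`. -/
def chain (m n k : ℕ) (c : Fin n → ℕ) : Set (PIdx n k →₀ ℕ) :=
  {d | (∑ α, d α) = m ∧ lcount d = c}

/-- The condition for `(k₁,…,k_n) = c` to be the type of a chain: `Σ kᵢ = mk`,
each `kᵢ ≤ m`, and at least `k` of the `kᵢ` are nonzero. -/
def IsChainType (m n k : ℕ) (c : Fin n → ℕ) : Prop :=
  (∑ i, c i) = m * k ∧ (∀ i, c i ≤ m) ∧ k ≤ (Finset.univ.filter fun i => c i ≠ 0).card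

/-- `L(σ)`: the linear span of the chain of type `c`. -/
noncomputable def Lchain (m n k : ℕ) (c : Fin n → ℕ) :
    Submodule ℝ (MvPolynomial (PIdx n k) ℝ) :=
  Submodule.span ℝ {p | ∃ d ∈ chain m n k c, p = MvPolynomial.monomial d 1}

open Classical in
/-- `Pr(·,σ)`: the orthogonal projection onto `L(σ)` with respect to the inner product
making the canonical basis orthonormal; it keeps exactly the coefficients of the canonical
basis vectors lying in the chain `σ` and kills all the others. -/
noncomputable def projChain (m n k : ℕ) (c : Fin n → ℕ)
    (p : MvPolynomial (PIdx n k) ℝ) : MvPolynomial (PIdx n k) ℝ :=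
  ∑ d ∈ p.support, if d ∈ chain m n k c then MvPolynomial.monomial d (p.coeff d) else 0

/-- The generic decomposable vector `w = x₁ ∧ … ∧ x_k`, where `x_i = Σ_j α_{ij} e_j` with
independent indeterminates `α_{ij}`: its Plücker coordinates are polynomials in the
variables `α_{ij}`, i.e. elements of `ℝ[α_{ij}] = MvPolynomial (Fin k × Fin n) ℝ`. -/
noncomputable def genericWedge (n k : ℕ) : PIdx n k → MvPolynomial (Fin k × Fin n) ℝ :=
  wedgeCoords fun i j => MvPolynomial.X (i, j)

/-- The polynomial `A_s(α_{ij}) = (wᵐ, v_s)`: the inner product of `wᵐ` with the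
canonical basis vector `v_s` (the monomial with exponent vector `d`), i.e. the
coefficient of that monomial in `wᵐ`; it is a homogeneous polynomial of degree `mk`
in the variables `α_{ij}`. -/
noncomputable def Apoly (m n k : ℕ) (d : PIdx n k →₀ ℕ) :
    MvPolynomial (Fin k × Fin n) ℝ :=
  MvPolynomial.coeff d ((linPoly (genericWedge n k)) ^ m)
/-! The coefficients of `wᵐ` on a chain `σ` are the values `A_d(x)` of the polynomials `A_d`
at the matrix `x` of the `xᵢ`, so the coordinate projection of `V₀` to `ℝ^σ` is spanned by the
evaluation vectors `(A_d(x))_{d ∈ σ}`. Their span has the dimension of the span of the `A_d`: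
under the dot product it is the annihilator of the linear relations among the `A_d`, since a
polynomial vanishing at every point is zero.

It remains to see that `V₀ ∩ L(σ)` projects onto the same space, i.e. that `Pr(·, σ)` maps `V₀`
into itself. Scaling the columns of `x` by `t ∈ ℝⁿ` multiplies the coefficient of the monomial
`d` in `wᵐ` by `∏ⱼ tⱼ ^ lⱼ(d)`, and a suitable finite combination of such rescaled powers keeps
exactly the monomials with `(lⱼ(d)) = c`; the remaining condition `Σ d = m` of a chain is
automatic, `V₀` being homogeneous of degree `m`. -/

open MvPolynomial Submodule Module

section InfiniteField

variable {K : Type*} [Field K] [Infinite K]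

theorem finrank_span_range_eval {ι σ : Type*} [Fintype ι] (g : ι → MvPolynomial σ K) :
    finrank K (span K (Set.range fun x : σ → K => fun i => eval x (g i))) =
      finrank K (span K (Set.range g)) := by
  classical
  set Φ := Fintype.linearCombination K g
  set evΦ : (σ → K) → Dual K (ι → K) := fun x => Φ.dualMap (aeval x).toLinearMap
  have hdual : ∀ x, dotProductEquiv K ι (fun i => eval x (g i)) = evΦ x := fun x =>
    LinearMap.ext fun v => by
      simp [evΦ, Φ, Fintype.linearCombination_apply, dotProduct, mul_comm]
  have hcoann : (span K (Set.range evΦ)).dualCoannihilator = LinearMap.ker Φ := by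
    ext v
    have hgen : (∀ x, evΦ x v = 0) ↔ Φ v = 0 := by
      simpa [evΦ, funext_iff] using (MvPolynomial.funext_iff (p := Φ v) (q := 0)).symm
    rw [mem_dualCoannihilator, LinearMap.mem_ker, ← hgen]
    refine ⟨fun h x => h _ (subset_span ⟨x, rfl⟩), fun h φ hφ => ?_⟩
    have : span K (Set.range evΦ) ≤ LinearMap.ker (Dual.eval K _ v) :=
      span_le.mpr (Set.range_subset_iff.mpr h)
    exact this hφ
  calc finrank K (span K (Set.range fun x : σ → K => fun i => eval x (g i)))
      = finrank K (span K (Set.range evΦ)) := by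
        rw [← (dotProductEquiv K ι).finrank_map_eq, map_span, ← Set.range_comp]
        exact congrArg (fun f => finrank K (span K (Set.range f))) (funext hdual)
    _ = finrank K (LinearMap.range Φ.dualMap) := by
        rw [LinearMap.range_dualMap_eq_dualAnnihilator_ker, ← hcoann,
          Subspace.dualCoannihilator_dualAnnihilator_eq]
    _ = finrank K (span K (Set.range g)) := by
        rw [LinearMap.finrank_range_dualMap_eq_finrank_range, Fintype.range_linearCombination]

theorem exists_finsupp_sum_mul_prod_pow_eq_ite {ι : Type*} [Fintype ι] (T : Finset (ι → ℕ))
    (c : ι → ℕ) : ∃ a : (ι → K) →₀ K,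
      ∀ e ∈ T, (a.sum fun t b => b * ∏ j, t j ^ e j) = if e = c then 1 else 0 := by
  classical
  set g : T → MvPolynomial ι K := fun e => monomial (Finsupp.equivFunOnFinite.symm e.1) 1
  have hg : LinearIndependent K g :=
    (basisMonomials ι K).linearIndependent.comp _
      (Finsupp.equivFunOnFinite.symm.injective.comp Subtype.val_injective)
  have htop : span K (Set.range fun t : ι → K => fun e : T => eval t (g e)) = ⊤ := by
    apply eq_top_of_finrank_eq
    rw [finrank_span_range_eval, finrank_span_eq_card hg, Module.finrank_fintype_fun_eq_card]
  obtain ⟨a, ha⟩ := Finsupp.mem_span_range_iff_exists_finsupp.mp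
    (htop ▸ mem_top : (fun e : T => if e.1 = c then (1 : K) else 0) ∈ _)
  refine ⟨a, fun e he => ?_⟩
  simpa only [g, Finsupp.sum, Finset.sum_apply, Pi.smul_apply, smul_eq_mul, eval_monomial,
    one_mul, Finsupp.prod_fintype _ _ fun j => pow_zero _, Finsupp.coe_equivFunOnFinite_symm]
    using congrFun ha ⟨e, he⟩

theorem exists_mem_coeff_eq_ite_of_scaling {σ ι : Type*} [Fintype ι]
    {W : Submodule K (MvPolynomial σ K)} (wt : (σ →₀ ℕ) → ι → ℕ)
    (S : (ι → K) → MvPolynomial σ K → MvPolynomial σ K)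
    (hS : ∀ t p d, coeff d (S t p) = (∏ j, t j ^ wt d j) * coeff d p)
    (hW : ∀ t, ∀ p ∈ W, S t p ∈ W) {p : MvPolynomial σ K} (hp : p ∈ W) (c : ι → ℕ) :
    ∃ q ∈ W, ∀ d, coeff d q = if wt d = c then coeff d p else 0 := by
  classical
  obtain ⟨a, ha⟩ := exists_finsupp_sum_mul_prod_pow_eq_ite (K := K) (p.support.image wt) c
  refine ⟨a.sum fun t b => b • S t p,
    sum_mem fun t _ => smul_mem _ _ (hW t p hp), fun d => ?_⟩
  have hq : coeff d (a.sum fun t b => b • S t p) =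
      (a.sum fun t b => b * ∏ j, t j ^ wt d j) * coeff d p := by
    simp only [Finsupp.sum, coeff_sum, coeff_smul, hS, smul_eq_mul, Finset.sum_mul, mul_assoc]
  rw [hq]
  by_cases hd : d ∈ p.support
  · rw [ha _ (Finset.mem_image_of_mem wt hd), ite_mul, one_mul, zero_mul]
  · rw [MvPolynomial.notMem_support_iff.mp hd, mul_zero, ite_self]

end InfiniteField

theorem coeff_aeval_C_mul_X {R σ : Type*} [CommSemiring R] (χ : σ → R) (p : MvPolynomial σ R)
    (d : σ →₀ ℕ) :
    coeff d (aeval (fun i => C (χ i) * X i) p) = (d.prod fun i e => χ i ^ e) * coeff d p := by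
  classical
  induction p using MvPolynomial.induction_on' with
  | monomial d' a =>
    have : aeval (fun i => C (χ i) * X i) (monomial d' a) =
        monomial d' ((d'.prod fun i e => χ i ^ e) * a) := by
      rw [aeval_monomial, monomial_eq, algebraMap_eq]
      simp only [mul_pow, ← map_pow, Finsupp.prod_mul, ← map_finsuppProd, C_mul]
      ring
    rw [this, coeff_monomial, coeff_monomial]
    split_ifs with h
    · rw [h]
    · rw [mul_zero]
  | add p q hp hq => rw [map_add, coeff_add, coeff_add, hp, hq, mul_add]

theorem finrank_inf_range_eq_finrank_map {R M N : Type*} [Ring R] [AddCommGroup M] [Module R M]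
    [AddCommGroup N] [Module R N] {W : Submodule R M} (f : N →ₗ[R] M) (g : M →ₗ[R] N)
    (hgf : g ∘ₗ f = LinearMap.id) (hW : ∀ p ∈ W, f (g p) ∈ W) :
    finrank R ↥(W ⊓ LinearMap.range f) = finrank R ↥(W.map g) := by
  have hf : Function.Injective f := LinearMap.injective_of_comp_eq_id f g hgf
  have hinf : W ⊓ LinearMap.range f = (W.map g).map f := by
    ext p
    simp only [mem_inf, LinearMap.mem_range, mem_map]
    constructor
    · rintro ⟨hp, u, rfl⟩
      exact ⟨u, ⟨f u, hp, LinearMap.congr_fun hgf u⟩, rfl⟩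
    · rintro ⟨_, ⟨q, hq, rfl⟩, rfl⟩
      exact ⟨hW q hq, _, rfl⟩
  rw [hinf, (equivMapOfInjective f hf _).finrank_eq]

/-- The diagonal matrix `diag(t)` acting on `Sᵐ(Λᵏℝⁿ)`: it scales `e_α` by `∏_{j ∈ α} tⱼ`. -/
noncomputable def torusAct {n k : ℕ} (t : Fin n → ℝ) :
    MvPolynomial (PIdx n k) ℝ →ₐ[ℝ] MvPolynomial (PIdx n k) ℝ :=
  aeval fun α => C (∏ j ∈ α.1, t j) * X α

theorem prod_prod_pow_eq_prod_pow_lcount {n k : ℕ} (t : Fin n → ℝ) (d : PIdx n k →₀ ℕ) :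
    (d.prod fun α e => (∏ j ∈ α.1, t j) ^ e) = ∏ j, t j ^ lcount d j := by
  classical
  simp only [Finsupp.prod_fintype _ _ fun _ => pow_zero _, lcount,
    ← Finset.prod_pow_eq_pow_sum]
  rw [Finset.prod_comm]
  refine Finset.prod_congr rfl fun α _ => ?_
  simp only [pow_ite, pow_zero, Finset.prod_ite_mem, Finset.univ_inter, Finset.prod_pow]

theorem coeff_torusAct {n k : ℕ} (t : Fin n → ℝ) (p : MvPolynomial (PIdx n k) ℝ)
    (d : PIdx n k →₀ ℕ) : coeff d (torusAct t p) = (∏ j, t j ^ lcount d j) * coeff d p := by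
  rw [torusAct, coeff_aeval_C_mul_X, prod_prod_pow_eq_prod_pow_lcount]

theorem wedgeCoords_mul_col {n k : ℕ} (t : Fin n → ℝ) (x : Fin k → Fin n → ℝ) (α : PIdx n k) :
    wedgeCoords (fun i j => t j * x i j) α = (∏ j ∈ α.1, t j) * wedgeCoords x α := by
  have hprod : ∏ j, t (toTuple α j) = ∏ j ∈ α.1, t j := by
    rw [← Finset.prod_coe_sort α.1 t]
    exact Equiv.prod_comp (α.1.orderIsoOfFin α.2).toEquiv (fun j => t j)
  rw [wedgeCoords, wedgeCoords, ← hprod, ← Matrix.det_mul_row]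
  rfl

theorem torusAct_linPoly {n k : ℕ} (t : Fin n → ℝ) (w : PIdx n k → ℝ) :
    torusAct t (linPoly w) = linPoly fun α => (∏ j ∈ α.1, t j) * w α := by
  simp only [torusAct, linPoly, map_sum, map_mul, aeval_C, aeval_X, algebraMap_eq]
  exact Finset.sum_congr rfl fun α _ => by ring

theorem torusAct_mem_V0 {m n k : ℕ} (t : Fin n → ℝ) {p : MvPolynomial (PIdx n k) ℝ}
    (hp : p ∈ V0 m n k) : torusAct t p ∈ V0 m n k := by
  have : (V0 m n k).map (torusAct t).toLinearMap ≤ V0 m n k := by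
    rw [V0, map_span, span_le]
    rintro _ ⟨_, ⟨x, rfl⟩, rfl⟩
    refine subset_span ⟨fun i j => t j * x i j, ?_⟩
    rw [AlgHom.toLinearMap_apply, map_pow, torusAct_linPoly]
    congr 2
    funext α
    rw [wedgeCoords_mul_col]
  exact this (mem_map_of_mem hp)

theorem V0_le_homogeneousSubmodule (m n k : ℕ) :
    V0 m n k ≤ homogeneousSubmodule (PIdx n k) ℝ m := by
  rw [V0, span_le]
  rintro _ ⟨x, rfl⟩
  have hlin : (linPoly (wedgeCoords x)).IsHomogeneous 1 :=
    IsHomogeneous.sum _ _ _ fun α _ => by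
      simpa using (isHomogeneous_C _ (wedgeCoords x α)).mul (isHomogeneous_X ℝ α)
  simpa using hlin.pow m

theorem chain_finite (m n k : ℕ) (c : Fin n → ℕ) : (chain m n k c).Finite := by
  refine (Finset.Iic (Finsupp.equivFunOnFinite.symm fun _ : PIdx n k => m)).finite_toSet.subset
    fun d hd => ?_
  simp only [Finset.coe_Iic, Set.mem_Iic, Finsupp.le_iff]
  intro α _
  simpa [← hd.1] using Finset.single_le_sum (fun β _ => Nat.zero_le (d β)) (Finset.mem_univ α)

noncomputable instance (m n k : ℕ) (c : Fin n → ℕ) : Fintype (chain m n k c) :=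
  (chain_finite m n k c).fintype

theorem coeff_projChain {m n k : ℕ} {c : Fin n → ℕ} (p : MvPolynomial (PIdx n k) ℝ)
    (d : PIdx n k →₀ ℕ) [Decidable (d ∈ chain m n k c)] :
    coeff d (projChain m n k c p) = if d ∈ chain m n k c then coeff d p else 0 := by
  rw [projChain, coeff_sum, Finset.sum_eq_single d]
  · split_ifs <;> simp
  · intro b _ hb
    split_ifs <;> simp [coeff_monomial, hb]
  · intro hd
    split_ifs <;> simp [MvPolynomial.notMem_support_iff.mp hd]

theorem projChain_mem_V0 {m n k : ℕ} (c : Fin n → ℕ) {p : MvPolynomial (PIdx n k) ℝ}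
    (hp : p ∈ V0 m n k) : projChain m n k c p ∈ V0 m n k := by
  classical
  obtain ⟨q, hq, hcoeff⟩ := exists_mem_coeff_eq_ite_of_scaling lcount (fun t => torusAct t)
    coeff_torusAct (fun t _ => torusAct_mem_V0 t) hp c
  convert hq using 1
  ext d
  rw [coeff_projChain, hcoeff]
  by_cases hdeg : ∑ α, d α = m
  · simp [chain, hdeg]
  · have : coeff d p = 0 := (V0_le_homogeneousSubmodule m n k hp).coeff_eq_zero
      (by rwa [Finsupp.degree_eq_sum])
    simp [this]

noncomputable def chainCoeff (m n k : ℕ) (c : Fin n → ℕ) :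
    MvPolynomial (PIdx n k) ℝ →ₗ[ℝ] (chain m n k c → ℝ) :=
  LinearMap.pi fun d => lcoeff ℝ d.1

noncomputable def chainMonomials (m n k : ℕ) (c : Fin n → ℕ) :
    (chain m n k c → ℝ) →ₗ[ℝ] MvPolynomial (PIdx n k) ℝ :=
  Fintype.linearCombination ℝ fun d => monomial d.1 1

theorem coeff_chainMonomials {m n k : ℕ} {c : Fin n → ℕ} (u : chain m n k c → ℝ)
    (d : PIdx n k →₀ ℕ) [Decidable (d ∈ chain m n k c)] :
    coeff d (chainMonomials m n k c u) = if h : d ∈ chain m n k c then u ⟨d, h⟩ else 0 := by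
  simp only [chainMonomials, Fintype.linearCombination_apply, coeff_sum, coeff_smul,
    coeff_monomial, smul_eq_mul, mul_ite, mul_one, mul_zero]
  split_ifs with h
  · rw [Fintype.sum_eq_single ⟨d, h⟩ fun x hx => if_neg fun hxd => hx (Subtype.ext hxd),
      if_pos rfl]
  · exact Finset.sum_eq_zero fun x _ => if_neg fun hxd : x.1 = d => h (hxd ▸ x.2)

theorem chainCoeff_comp_chainMonomials (m n k : ℕ) (c : Fin n → ℕ) :
    chainCoeff m n k c ∘ₗ chainMonomials m n k c = LinearMap.id := by
  classical
  ext u d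
  simp [chainCoeff, coeff_chainMonomials]

theorem chainMonomials_chainCoeff (m n k : ℕ) (c : Fin n → ℕ) (p : MvPolynomial (PIdx n k) ℝ) :
    chainMonomials m n k c (chainCoeff m n k c p) = projChain m n k c p := by
  classical
  ext d
  rw [coeff_chainMonomials, coeff_projChain]
  split_ifs <;> rfl

theorem Lchain_eq_range_chainMonomials (m n k : ℕ) (c : Fin n → ℕ) :
    Lchain m n k c = LinearMap.range (chainMonomials m n k c) := by
  rw [chainMonomials, Fintype.range_linearCombination, Lchain]
  congr 1
  ext p
  simp [eq_comm]

theorem coeff_linPoly_wedgeCoords_pow (m : ℕ) {n k : ℕ} (x : Fin k → Fin n → ℝ)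
    (d : PIdx n k →₀ ℕ) :
    coeff d (linPoly (wedgeCoords x) ^ m) = eval (Function.uncurry x) (Apoly m n k d) := by
  have hwedge : ∀ α, eval (Function.uncurry x) (genericWedge n k α) = wedgeCoords x α := by
    intro α
    rw [genericWedge, wedgeCoords, wedgeCoords, RingHom.map_det]
    congr 1
    ext i j
    simp [Matrix.map_apply]
  have hlin : map (eval (Function.uncurry x)) (linPoly (genericWedge n k)) =
      linPoly (wedgeCoords x) := by
    simp only [linPoly, map_sum, map_mul, map_C, map_X, hwedge]
  rw [Apoly, ← coeff_map, map_pow, hlin]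

theorem map_chainCoeff_V0 (m n k : ℕ) (c : Fin n → ℕ) :
    (V0 m n k).map (chainCoeff m n k c) = span ℝ (Set.range fun x : Fin k × Fin n → ℝ =>
      fun d : chain m n k c => eval x (Apoly m n k d)) := by
  rw [V0, map_span]
  congr 1
  ext u
  constructor
  · rintro ⟨_, ⟨x, rfl⟩, rfl⟩
    exact ⟨Function.uncurry x, funext fun d => (coeff_linPoly_wedgeCoords_pow m x d).symm⟩
  · rintro ⟨y, rfl⟩
    refine ⟨_, ⟨Function.curry y, rfl⟩, funext fun d => ?_⟩
    rw [chainCoeff, LinearMap.pi_apply, lcoeff_apply, coeff_linPoly_wedgeCoords_pow,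
      Function.uncurry_curry]

theorem dim_V0_inter_Lchain_general (m n k : ℕ) (c : Fin n → ℕ) :
    Module.finrank ℝ ↥(V0 m n k ⊓ Lchain m n k c) =
      Module.finrank ℝ ↥(Submodule.span ℝ (Apoly m n k '' chain m n k c)) := by
  calc finrank ℝ ↥(V0 m n k ⊓ Lchain m n k c)
      = finrank ℝ ↥((V0 m n k).map (chainCoeff m n k c)) := by
        rw [Lchain_eq_range_chainMonomials]
        refine finrank_inf_range_eq_finrank_map _ _ (chainCoeff_comp_chainMonomials m n k c)
          fun p hp => ?_
        rw [chainMonomials_chainCoeff]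
        exact projChain_mem_V0 c hp
    _ = finrank ℝ ↥(span ℝ (Set.range fun d : chain m n k c => Apoly m n k d)) := by
        rw [map_chainCoeff_V0, finrank_span_range_eval]
    _ = _ := by rw [Set.image_eq_range]

/-- **Theorem 4.** For every chain `σ = {v₁,…,v_t}` of type `c`,
`dim (V₀(m,n,k) ∩ L(σ)) = r(σ)`, where `r(σ)` is the maximal number of linearly
independent polynomials among `A₁,…,A_t`, i.e. the dimension of their ℝ-linear span. -/
theorem dim_V0_inter_Lchain (m n k : ℕ) (hm : 1 ≤ m) (hk : 1 ≤ k) (hkn : k ≤ n)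
    (c : Fin n → ℕ) (hc : IsChainType m n k c) :
    Module.finrank ℝ ↥(V0 m n k ⊓ Lchain m n k c) =
      Module.finrank ℝ ↥(Submodule.span ℝ (Apoly m n k '' chain m n k c)) :=
  dim_V0_inter_Lchain_general m n k c
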